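/- For a random caterpillar with m ≥ 2 spine nodes, Z_n/n^2 converges to 1/m in L^1 as n → ∞. -/

import Mathlib

open Finset Filter MeasureTheory

/-- Number of leaves attached to spine node `i` given attachment choices `ω`. -/
def leafCount {m n : ℕ} (ω : Fin n → Fin m) (i : Fin m) : ℕ :=
  (Finset.univ.filter (fun j => ω j = i)).card

/-- Degree of spine node `i` in the caterpillar: its leaf count plus 1 for an
end spine node, plus 2 for an interior spine node. -/
def degS {m n : ℕ} (ω : Fin n → Fin m) (i : Fin m) : ℕ :=
  leafCount ω i + (if i.val = 0 ∨ i.val = m - 1 then 1 else 2)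

/-- Zagreb index: sum of squared degrees of all nodes (each of the `n` leaves has degree 1). -/
def zagreb {m n : ℕ} (ω : Fin n → Fin m) : ℕ :=
  (∑ i, (degS ω i) ^ 2) + n

section Aux

variable {m n : ℕ}

lemma sum_prod_eval (h : Fin n → Fin m → ℝ) :
    ∑ ω : Fin n → Fin m, ∏ j, h j (ω j) = ∏ j, ∑ v, h j v :=
  (Fintype.prod_sum (fun j v => h j v)).symm

lemma single_eval (j : Fin n) (u : Fin m → ℝ) :
    ∑ ω : Fin n → Fin m, u (ω j) = (m : ℝ) ^ (n - 1) * ∑ v, u v := by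
  have key : ∀ ω : Fin n → Fin m, u (ω j) = ∏ l, (if l = j then u (ω l) else 1) := by
    intro ω
    rw [Finset.prod_ite_eq' Finset.univ j (fun l => u (ω l))]
    simp
  simp_rw [key]
  rw [sum_prod_eval (fun l v => if l = j then u v else 1)]
  rw [← Finset.mul_prod_erase Finset.univ _ (Finset.mem_univ j)]
  have h1 : (∑ v : Fin m, if j = j then u v else (1:ℝ)) = ∑ v, u v := by simp
  have h2 : ∀ l ∈ Finset.univ.erase j,
      (∑ v : Fin m, if l = j then u v else (1:ℝ)) = (m : ℝ) := by
    intro l hl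
    rw [Finset.mem_erase] at hl
    simp [hl.1]
  rw [h1, Finset.prod_congr rfl h2, Finset.prod_const,
    Finset.card_erase_of_mem (Finset.mem_univ j), Finset.card_univ, Fintype.card_fin,
    mul_comm]

lemma pair_eval_zero {j k : Fin n} (hjk : j ≠ k) (u : Fin m → ℝ) (hu : ∑ v, u v = 0) :
    ∑ ω : Fin n → Fin m, u (ω j) * u (ω k) = 0 := by
  have key : ∀ ω : Fin n → Fin m, u (ω j) * u (ω k)
      = ∏ l, (if l = j then u (ω l) else if l = k then u (ω l) else 1) := by
    intro ω
    rw [← Finset.mul_prod_erase Finset.univ _ (Finset.mem_univ j),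
      ← Finset.mul_prod_erase (Finset.univ.erase j) _
        (Finset.mem_erase.mpr ⟨Ne.symm hjk, Finset.mem_univ k⟩)]
    have h1 : ∀ l ∈ (Finset.univ.erase j).erase k,
        (if l = j then u (ω l) else if l = k then u (ω l) else (1:ℝ)) = 1 := by
      intro l hl
      rw [Finset.mem_erase, Finset.mem_erase] at hl
      simp [hl.1, hl.2.1]
    rw [Finset.prod_eq_one h1]
    simp [Ne.symm hjk]
  simp_rw [key]
  rw [sum_prod_eval (fun l v => if l = j then u v else if l = k then u v else 1)]
  apply Finset.prod_eq_zero (Finset.mem_univ j)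
  simpa using hu

lemma leafCount_eq_sum (ω : Fin n → Fin m) (i : Fin m) :
    (leafCount ω i : ℝ) = ∑ j, (if ω j = i then (1:ℝ) else 0) := by
  rw [leafCount, Finset.card_filter]
  push_cast
  simp

lemma sum_leafCount (ω : Fin n → Fin m) : ∑ i, (leafCount ω i : ℝ) = n := by
  simp_rw [leafCount_eq_sum]
  rw [Finset.sum_comm]
  simp

lemma var_bound (hm : 2 ≤ m) (i : Fin m) :
    ∑ ω : Fin n → Fin m, ((leafCount ω i : ℝ) - n / m) ^ 2 ≤ n * (m : ℝ) ^ n := by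
  have hm0 : (0:ℝ) < m := by exact_mod_cast Nat.lt_of_lt_of_le Nat.zero_lt_two hm
  set u : Fin m → ℝ := fun v => (if v = i then (1:ℝ) else 0) - 1 / m with hu
  have husum : ∑ v, u v = 0 := by
    rw [hu]
    rw [Finset.sum_sub_distrib, Finset.sum_ite_eq' Finset.univ i (fun _ => (1:ℝ)),
      Finset.sum_const, Finset.card_univ, Fintype.card_fin]
    simp
    field_simp
    norm_num
  have hdecomp : ∀ ω : Fin n → Fin m, (leafCount ω i : ℝ) - n / m = ∑ j, u (ω j) := by
    intro ω
    rw [hu]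
    rw [Finset.sum_sub_distrib, Finset.sum_const, Finset.card_univ, Fintype.card_fin,
      leafCount_eq_sum]
    congr 1
    rw [nsmul_eq_mul]
    field_simp
  have expand : ∑ ω : Fin n → Fin m, ((leafCount ω i : ℝ) - n / m) ^ 2
      = ∑ j : Fin n, ∑ k : Fin n, ∑ ω : Fin n → Fin m, u (ω j) * u (ω k) := by
    simp_rw [hdecomp, sq, Finset.sum_mul_sum]
    rw [Finset.sum_comm]
    exact Finset.sum_congr rfl fun j _ => Finset.sum_comm
  rw [expand]
  have diag : ∀ j : Fin n, ∑ k : Fin n, ∑ ω : Fin n → Fin m, u (ω j) * u (ω k)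
      = (m : ℝ) ^ (n - 1) * ∑ v, u v * u v := by
    intro j
    rw [Finset.sum_eq_single j]
    · exact single_eval j (fun v => u v * u v)
    · intro k _ hkj
      exact pair_eval_zero (Ne.symm hkj) u husum
    · intro h
      exact absurd (Finset.mem_univ j) h
  have hsq1 : ∑ v, u v * u v ≤ (m : ℝ) := by
    have : ∀ v : Fin m, u v * u v ≤ 1 := by
      intro v
      have h1 : (0:ℝ) < 1 / m := by positivity
      have h2 : 1 / (m:ℝ) ≤ 1 := by
        rw [div_le_one hm0]
        exact_mod_cast Nat.one_le_of_lt (Nat.lt_of_lt_of_le Nat.one_lt_two hm)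
      simp only [one_div] at h1 h2
      rcases eq_or_ne v i with h | h <;> simp [hu, h] <;> nlinarith
    calc ∑ v, u v * u v ≤ ∑ _v : Fin m, (1:ℝ) := Finset.sum_le_sum fun v _ => this v
      _ = m := by simp
  calc ∑ j : Fin n, ∑ k : Fin n, ∑ ω : Fin n → Fin m, u (ω j) * u (ω k)
      = ∑ _j : Fin n, (m : ℝ) ^ (n - 1) * ∑ v, u v * u v :=
        Finset.sum_congr rfl fun j _ => diag j
    _ ≤ ∑ _j : Fin n, (m : ℝ) ^ (n - 1) * m :=
        Finset.sum_le_sum fun j _ => by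
          have : (0:ℝ) ≤ (m:ℝ) ^ (n-1) := by positivity
          exact mul_le_mul_of_nonneg_left hsq1 this
    _ = n * ((m : ℝ) ^ (n - 1) * m) := by
        rw [Finset.sum_const, Finset.card_univ, Fintype.card_fin, nsmul_eq_mul]
    _ ≤ n * (m : ℝ) ^ n := by
        cases n with
        | zero => simp
        | succ k => rw [Nat.succ_sub_one, ← pow_succ]

lemma abs_sum_bound (hm : 2 ≤ m) (i : Fin m) :
    ∑ ω : Fin n → Fin m, |(leafCount ω i : ℝ) - n / m|
      ≤ Real.sqrt n * (m : ℝ) ^ n := by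
  have hm0 : (0:ℝ) < m := by exact_mod_cast Nat.lt_of_lt_of_le Nat.zero_lt_two hm
  set S := ∑ ω : Fin n → Fin m, |(leafCount ω i : ℝ) - n / m| with hS
  have hS0 : 0 ≤ S := Finset.sum_nonneg fun _ _ => abs_nonneg _
  have hsq : S ^ 2 ≤ (m : ℝ) ^ n * ((n : ℝ) * (m : ℝ) ^ n) := by
    have hcs := Finset.sum_mul_sq_le_sq_mul_sq Finset.univ
      (fun _ : Fin n → Fin m => (1:ℝ)) (fun ω => |(leafCount ω i : ℝ) - n / m|)
    simp only [one_mul, one_pow, sq_abs] at hcs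
    have hcard : (∑ _ω : Fin n → Fin m, (1:ℝ)) = (m : ℝ) ^ n := by
      rw [Finset.sum_const, Finset.card_univ, Fintype.card_fun, Fintype.card_fin,
        Fintype.card_fin, nsmul_eq_mul, mul_one]
      push_cast
      ring
    calc S ^ 2 ≤ (∑ _ω : Fin n → Fin m, (1:ℝ))
          * ∑ ω : Fin n → Fin m, ((leafCount ω i : ℝ) - n / m) ^ 2 := hcs
      _ ≤ (m : ℝ) ^ n * ((n : ℝ) * (m : ℝ) ^ n) := by
          rw [hcard]
          exact mul_le_mul_of_nonneg_left (var_bound hm i) (by positivity)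
  have key : (m : ℝ) ^ n * ((n : ℝ) * (m : ℝ) ^ n)
      = (Real.sqrt n * (m : ℝ) ^ n) ^ 2 := by
    rw [mul_pow, Real.sq_sqrt (by positivity)]
    ring
  calc S = Real.sqrt (S ^ 2) := (Real.sqrt_sq hS0).symm
    _ ≤ Real.sqrt ((Real.sqrt n * (m : ℝ) ^ n) ^ 2) :=
        Real.sqrt_le_sqrt (key ▸ hsq)
    _ = Real.sqrt n * (m : ℝ) ^ n := Real.sqrt_sq (by positivity)

lemma zagreb_dev (hm : 2 ≤ m) (ω : Fin n → Fin m) :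
    |(zagreb ω : ℝ) - (n : ℝ) ^ 2 / m|
      ≤ 2 * n * (∑ i, |(leafCount ω i : ℝ) - n / m|) + (5 * n + 4 * m) := by
  have hm0 : (0:ℝ) < m := by exact_mod_cast Nat.lt_of_lt_of_le Nat.zero_lt_two hm
  set L : Fin m → ℝ := fun i => (leafCount ω i : ℝ) with hL
  set c : Fin m → ℝ := fun i => if i.val = 0 ∨ i.val = m - 1 then 1 else 2 with hc
  have hL0 : ∀ i, 0 ≤ L i := fun i => by positivity
  have hLn : ∀ i, L i ≤ n := by
    intro i
    have : leafCount ω i ≤ n := by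
      rw [leafCount]
      calc (Finset.univ.filter (fun j => ω j = i)).card
          ≤ (Finset.univ : Finset (Fin n)).card := Finset.card_filter_le _ _
        _ = n := by simp
    show (leafCount ω i : ℝ) ≤ n
    exact_mod_cast this
  have hc0 : ∀ i, 0 ≤ c i := by
    intro i; rw [hc]; dsimp only; split <;> norm_num
  have hc2 : ∀ i, c i ≤ 2 := by
    intro i; rw [hc]; dsimp only; split <;> norm_num
  have hzag : (zagreb ω : ℝ) = (∑ i, (L i + c i) ^ 2) + n := by
    rw [zagreb]
    push_cast [degS, hL, hc]
    simp
  have key : (zagreb ω : ℝ) - (n : ℝ) ^ 2 / m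
      = (∑ i, (L i ^ 2 - ((n : ℝ) / m) ^ 2))
        + ((∑ i, (2 * c i * L i + c i ^ 2)) + n) := by
    rw [hzag, Finset.sum_sub_distrib, Finset.sum_const, Finset.card_univ, Fintype.card_fin,
      nsmul_eq_mul]
    have : (m : ℝ) * ((n : ℝ) / m) ^ 2 = (n : ℝ) ^ 2 / m := by
      field_simp
    rw [this]
    have hsplit : ∑ i, (L i + c i) ^ 2
        = (∑ i, L i ^ 2) + ∑ i, (2 * c i * L i + c i ^ 2) := by
      rw [← Finset.sum_add_distrib]
      apply Finset.sum_congr rfl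
      intro i _
      ring
    rw [hsplit]
    ring
  have habs1 : |∑ i, (L i ^ 2 - ((n : ℝ) / m) ^ 2)|
      ≤ 2 * n * ∑ i, |L i - n / m| := by
    calc |∑ i, (L i ^ 2 - ((n : ℝ) / m) ^ 2)|
        ≤ ∑ i, |L i ^ 2 - ((n : ℝ) / m) ^ 2| := Finset.abs_sum_le_sum_abs _ _
      _ ≤ ∑ i, 2 * n * |L i - n / m| := by
          apply Finset.sum_le_sum
          intro i _
          have : L i ^ 2 - ((n : ℝ) / m) ^ 2 = (L i - n / m) * (L i + n / m) := by ring
          rw [this, abs_mul]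
          have h1 : |L i + (n : ℝ) / m| ≤ 2 * n := by
            rw [abs_of_nonneg (by positivity)]
            have : (n : ℝ) / m ≤ n := by
              apply div_le_self (by positivity)
              exact_mod_cast Nat.one_le_of_lt (Nat.lt_of_lt_of_le Nat.one_lt_two hm)
            linarith [hLn i]
          calc |L i - (n : ℝ) / m| * |L i + (n : ℝ) / m|
              ≤ |L i - (n : ℝ) / m| * (2 * n) :=
                mul_le_mul_of_nonneg_left h1 (abs_nonneg _)
            _ = 2 * n * |L i - n / m| := by ring
      _ = 2 * n * ∑ i, |L i - n / m| := by rw [Finset.mul_sum]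
  have habs2 : (∑ i, (2 * c i * L i + c i ^ 2)) + (n : ℝ) ≤ 5 * n + 4 * m := by
    have h1 : ∑ i, 2 * c i * L i ≤ 4 * n := by
      calc ∑ i, 2 * c i * L i ≤ ∑ i, 4 * L i := by
            apply Finset.sum_le_sum
            intro i _
            have := hc2 i
            have := hc0 i
            have := hL0 i
            nlinarith
        _ = 4 * ∑ i, L i := by rw [Finset.mul_sum]
        _ = 4 * n := by rw [hL]; rw [sum_leafCount]
    have h2 : ∑ i, c i ^ 2 ≤ 4 * m := by
      calc ∑ i, c i ^ 2 ≤ ∑ _i : Fin m, (4:ℝ) := by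
            apply Finset.sum_le_sum
            intro i _
            have := hc2 i; have := hc0 i
            nlinarith
        _ = 4 * m := by
            rw [Finset.sum_const, Finset.card_univ, Fintype.card_fin, nsmul_eq_mul]
            ring
    rw [Finset.sum_add_distrib]
    linarith
  have habs2' : (0:ℝ) ≤ (∑ i, (2 * c i * L i + c i ^ 2)) + (n : ℝ) := by
    have : (0:ℝ) ≤ ∑ i, (2 * c i * L i + c i ^ 2) := by
      apply Finset.sum_nonneg
      intro i _
      have := hc0 i; have := hL0 i
      positivity
    positivity
  calc |(zagreb ω : ℝ) - (n : ℝ) ^ 2 / m|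
      ≤ |∑ i, (L i ^ 2 - ((n : ℝ) / m) ^ 2)|
        + |(∑ i, (2 * c i * L i + c i ^ 2)) + (n : ℝ)| := by
        rw [key]; exact abs_add_le _ _
    _ ≤ 2 * n * (∑ i, |L i - n / m|) + (5 * n + 4 * m) := by
        rw [abs_of_nonneg habs2']
        exact add_le_add habs1 habs2

end Aux

/-- `Z_n / n²` converges to `1/m` in `L¹` as `n → ∞`. -/
theorem zagreb_L1_convergence (m : ℕ) (hm : 2 ≤ m) :
    Tendsto (fun n : ℕ =>
        (∑ ω : Fin n → Fin m, |(zagreb ω : ℝ) / (n : ℝ) ^ 2 - 1 / m|) / (m : ℝ) ^ n)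
      atTop (nhds 0) := by
  have hm0 : (0:ℝ) < m := by exact_mod_cast Nat.lt_of_lt_of_le Nat.zero_lt_two hm
  apply squeeze_zero' (g := fun n : ℕ =>
    2 * m * (Real.sqrt n)⁻¹ + (5 / n + 4 * m / (n : ℝ) ^ 2))
  · filter_upwards with n
    exact div_nonneg (Finset.sum_nonneg fun _ _ => abs_nonneg _) (by positivity)
  · filter_upwards [eventually_ge_atTop 1] with n hn
    have hn0 : (0:ℝ) < n := by exact_mod_cast hn
    have hs0 : 0 < Real.sqrt n := Real.sqrt_pos.mpr hn0
    have hss : Real.sqrt n * Real.sqrt n = n := Real.mul_self_sqrt (le_of_lt hn0)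
    have hM : (0:ℝ) < (m:ℝ) ^ n := by positivity
    have step1 : ∀ ω : Fin n → Fin m,
        |(zagreb ω : ℝ) / (n : ℝ) ^ 2 - 1 / m|
          = |(zagreb ω : ℝ) - (n:ℝ)^2/m| / (n:ℝ)^2 := by
      intro ω
      have hne : (n:ℝ) ≠ 0 := ne_of_gt hn0
      have hmne : (m:ℝ) ≠ 0 := ne_of_gt hm0
      have hsmall : ((n:ℝ)^2/m) / (n:ℝ)^2 = 1/m := by
        rw [div_div, mul_comm, ← div_div, div_self (pow_ne_zero 2 hne)]
      have hrw : (zagreb ω : ℝ) / (n:ℝ)^2 - 1/m = ((zagreb ω : ℝ) - (n:ℝ)^2/m) / (n:ℝ)^2 := by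
        rw [sub_div, hsmall]
      rw [hrw, abs_div, abs_of_pos (show (0:ℝ) < (n:ℝ)^2 by positivity)]
    have step2 : (∑ ω : Fin n → Fin m, |(zagreb ω : ℝ) / (n : ℝ) ^ 2 - 1/m|)
        = (∑ ω : Fin n → Fin m, |(zagreb ω : ℝ) - (n:ℝ)^2/m|) / (n:ℝ)^2 := by
      rw [Finset.sum_div]
      exact Finset.sum_congr rfl fun ω _ => step1 ω
    have hcardfun : ((Finset.univ : Finset (Fin n → Fin m)).card : ℝ) = (m:ℝ)^n := by
      rw [Finset.card_univ, Fintype.card_fun, Fintype.card_fin, Fintype.card_fin]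
      push_cast
      ring
    have step3 : (∑ ω : Fin n → Fin m, |(zagreb ω : ℝ) - (n:ℝ)^2/m|)
        ≤ 2*n*((m:ℝ) * (Real.sqrt n * (m:ℝ)^n)) + (5*n + 4*m) * (m:ℝ)^n := by
      calc ∑ ω : Fin n → Fin m, |(zagreb ω : ℝ) - (n:ℝ)^2/m|
          ≤ ∑ ω : Fin n → Fin m,
              (2*(n:ℝ)*(∑ i, |(leafCount ω i : ℝ) - n/m|) + (5*n + 4*m)) :=
            Finset.sum_le_sum fun ω _ => zagreb_dev hm ω
        _ = 2*(n:ℝ) * (∑ ω : Fin n → Fin m, ∑ i, |(leafCount ω i : ℝ) - n/m|)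
              + (5*n + 4*m) * (m:ℝ)^n := by
            rw [Finset.sum_add_distrib, ← Finset.mul_sum, Finset.sum_const, nsmul_eq_mul,
              hcardfun]
            ring
        _ ≤ 2*(n:ℝ) * ((m:ℝ) * (Real.sqrt n * (m:ℝ)^n)) + (5*n + 4*m) * (m:ℝ)^n := by
            have hswap : (∑ ω : Fin n → Fin m, ∑ i, |(leafCount ω i : ℝ) - n/m|)
                = ∑ i, ∑ ω : Fin n → Fin m, |(leafCount ω i : ℝ) - n/m| :=
              Finset.sum_comm
            have hbd : (∑ ω : Fin n → Fin m, ∑ i, |(leafCount ω i : ℝ) - n/m|)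
                ≤ (m:ℝ) * (Real.sqrt n * (m:ℝ)^n) := by
              rw [hswap]
              calc ∑ i, ∑ ω : Fin n → Fin m, |(leafCount ω i : ℝ) - n/m|
                  ≤ ∑ _i : Fin m, Real.sqrt n * (m:ℝ)^n :=
                    Finset.sum_le_sum fun i _ => abs_sum_bound hm i
                _ = (m:ℝ) * (Real.sqrt n * (m:ℝ)^n) := by
                    rw [Finset.sum_const, Finset.card_univ, Fintype.card_fin, nsmul_eq_mul]
            have h2n : (0:ℝ) ≤ 2*(n:ℝ) := by positivity
            exact add_le_add (mul_le_mul_of_nonneg_left hbd h2n) le_rfl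
    rw [step2, div_div]
    have hfinal : (2*(n:ℝ)*((m:ℝ) * (Real.sqrt n * (m:ℝ)^n)) + (5*n + 4*m) * (m:ℝ)^n)
          / ((n:ℝ)^2 * (m:ℝ)^n)
        = 2 * m * (Real.sqrt n)⁻¹ + (5 / n + 4 * m / (n : ℝ) ^ 2) := by
      have hMne : (m:ℝ)^n ≠ 0 := ne_of_gt hM
      have hsne : Real.sqrt n ≠ 0 := ne_of_gt hs0
      have hne : (n:ℝ) ≠ 0 := ne_of_gt hn0
      field_simp
      ring_nf
      rw [Real.sq_sqrt (le_of_lt hn0)]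
      ring
    rw [← hfinal]
    gcongr
  · have t1 : Tendsto (fun n : ℕ => 2 * (m:ℝ) * (Real.sqrt n)⁻¹) atTop (nhds 0) := by
      have h2 := (tendsto_inv_atTop_nhds_zero_nat (𝕜 := ℝ)).sqrt
      rw [Real.sqrt_zero] at h2
      have h3 : Tendsto (fun n : ℕ => (Real.sqrt n)⁻¹) atTop (nhds 0) := by
        simpa [Real.sqrt_inv] using h2
      simpa using h3.const_mul (2 * (m:ℝ))
    have t2 : Tendsto (fun n : ℕ => 5 / (n:ℝ)) atTop (nhds 0) :=
      tendsto_const_div_atTop_nhds_zero_nat 5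
    have t3 : Tendsto (fun n : ℕ => 4 * (m:ℝ) / (n:ℝ)^2) atTop (nhds 0) := by
      have hp : Tendsto (fun n : ℕ => (n:ℝ)^2) atTop atTop :=
        (tendsto_pow_atTop two_ne_zero).comp tendsto_natCast_atTop_atTop
      exact tendsto_const_nhds.div_atTop hp
    simpa using t1.add (t2.add t3)
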